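/- Let m_3 be a positive integer. Then c_3^{2,m_3} > 0; in fact c_3^{2,m_3} = (P(m_3−1)^2 m_3 / 18) · (16 m_3^3 + 94 m_3^2 + 139 m_3 + 39). -/
import Mathlib


/-- `P k = (k+1/2)(k-1/2)⋯(3/2)(1/2) = (2k+1)!!/2^(k+1)`. -/
noncomputable def P (k : ℕ) : ℝ := ∏ i ∈ Finset.range (k + 1), ((i : ℝ) + 1 / 2)

/-- The combinatorial coefficient `c_p^{m₂,m₃}` from the paper. -/
noncomputable def c (m2 m3 p : ℕ) : ℝ :=
  (∑ i ∈ Finset.Icc (p - m2) (min m2 p),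
      ((2 : ℝ) ^ (2 * i) * P (m3 + i)
            / ((Nat.factorial (2 * i)) * (Nat.factorial (m2 - i)))
        - P (m3 - 1) / (2 * (Nat.factorial i) * (Nat.factorial (m2 - i)))) *
      ((2 : ℝ) ^ (2 * (p : ℤ) - 2 * (i : ℤ) - 1)
            * (2 * (m2 : ℝ) + 2 * (i : ℝ) - 2 * (p : ℝ) + 1) * P (m3 + p - i - 1)
            / ((Nat.factorial (2 * p - 2 * i)) * (Nat.factorial (m2 + i - p)))
        - P (m3 - 1) / (2 * (Nat.factorial (p - i)) * (Nat.factorial (m2 + i - p)))))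
  - ∑ i ∈ Finset.Ico (p - m2) (min m2 p),
      (2 : ℝ) ^ (2 * p) * P (m3 + i) * P (m3 + p - i - 1)
        / ((Nat.factorial (2 * i + 1)) * (Nat.factorial (2 * p - 2 * i - 1))
            * (Nat.factorial (m2 - i - 1)) * (Nat.factorial (m2 + i - p)))


lemma P_succ (k : ℕ) : P (k+1) = P k * ((k:ℝ) + 1 + 1/2) := by
  simp [P, Finset.prod_range_succ]

lemma P_pos (k : ℕ) : 0 < P k := by
  apply Finset.prod_pos; intro i _; positivity

lemma c_eq (n : ℕ) : c 2 (n+1) 3 = P n ^ 2 * (n+1) / 18 *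
      (16 * ((n:ℝ)+1) ^ 3 + 94 * ((n:ℝ)+1) ^ 2 + 139 * ((n:ℝ)+1) + 39) := by
  have h1 : Finset.Icc (3-2 : ℕ) (min 2 3) = {1, 2} := rfl
  have h2 : Finset.Ico (3-2 : ℕ) (min 2 3) = {1} := rfl
  rw [c, h1, h2, Finset.sum_insert (by decide), Finset.sum_singleton, Finset.sum_singleton]
  norm_num [Nat.factorial]
  have e1 : P (n+1) = P n * ((n:ℝ)+3/2) := by rw [P_succ]; ring
  have e2 : P (n+2) = P n * ((n:ℝ)+3/2) * ((n:ℝ)+5/2) := by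
    rw [show n+2=(n+1)+1 from rfl, P_succ, e1]; push_cast; ring
  have e3 : P (n+3) = P n * ((n:ℝ)+3/2) * ((n:ℝ)+5/2) * ((n:ℝ)+7/2) := by
    rw [show n+3=(n+2)+1 from rfl, P_succ, e2]; push_cast; ring
  simp only [show n+1+3-2-1 = n+1 from by omega, show 2+n = n+2 from by ring, e1, e2, e3]
  ring

theorem stmt_10 (m3 : ℕ) (hm3 : 1 ≤ m3) :
    0 < c 2 m3 3 ∧
    c 2 m3 3 = P (m3 - 1) ^ 2 * m3 / 18 *
      (16 * (m3 : ℝ) ^ 3 + 94 * m3 ^ 2 + 139 * m3 + 39) := by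
  obtain ⟨n, rfl⟩ : ∃ n, m3 = n + 1 := ⟨m3 - 1, (Nat.succ_pred_eq_of_pos hm3).symm⟩
  have heq := c_eq n
  have hP := P_pos n
  have hn : (0:ℝ) ≤ n := Nat.cast_nonneg n
  constructor
  · rw [heq]
    have hpoly : (0:ℝ) < 16 * ((n:ℝ)+1) ^ 3 + 94 * ((n:ℝ)+1) ^ 2 + 139 * ((n:ℝ)+1) + 39 := by
      nlinarith
    have h2 : (0:ℝ) < P n ^ 2 * (n+1) / 18 := by positivity
    exact mul_pos h2 hpoly
  · rw [heq]
    have : ((n:ℕ)+1 : ℕ) - 1 = n := by omega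
    rw [this]
    push_cast
    ring
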